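/- There is a bijection, preserving the number of ascents, between ascent sequences of length n avoiding the pattern 101 and permutations of length n avoiding the pattern 312. -/

import Mathlib

/-!
Both families decompose recursively like binary trees. A `101`-avoiding ascent sequence
splits at its last `0` as `u 0 (w + asc u + 1)` with `u`, `w` again `101`-avoiding ascent
sequences (or empty); a `312`-avoiding permutation splits at its letter `1` as
`(α + 1) 1 (β + |α| + 1)` with `α`, `β` again `312`-avoiding permutations. In both cases the
number of ascents is that of the two parts plus one exactly when the right part is nonempty,
so reading a binary tree with `n` nodes both ways gives an ascent-preserving bijection.
-/

/-- Number of ascents (adjacent strict rises) in a list of naturals. -/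
def ascList (l : List ℕ) : ℕ :=
  (l.zip l.tail).countP (fun p => decide (p.1 < p.2))

/-- `l` is an ascent sequence: nonempty, starts with 0, and each later letter is at most
one more than the number of ascents in the preceding prefix. -/
def IsAscSeq (l : List ℕ) : Prop :=
  l ≠ [] ∧ l.getD 0 0 = 0 ∧
    ∀ i, 0 < i → i < l.length → l.getD i 0 ≤ ascList (l.take i) + 1

/-- A sequence contains the pattern 101. -/
def Contains101 (l : List ℕ) : Prop :=
  ∃ i j k, i < j ∧ j < k ∧ k < l.length ∧
    l.getD j 0 < l.getD i 0 ∧ l.getD i 0 = l.getD k 0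

/-- A list (viewed as a permutation word) contains the pattern 312. -/
def Contains312 (l : List ℕ) : Prop :=
  ∃ i j k, i < j ∧ j < k ∧ k < l.length ∧
    l.getD j 0 < l.getD k 0 ∧ l.getD k 0 < l.getD i 0

open List

lemma eq_and_eq_of_append_cons_eq {α : Type*} {a : α} {u v u' v' : List α} (hv : a ∉ v)
    (hv' : a ∉ v') (h : u ++ a :: v = u' ++ a :: v') : u = u' ∧ v = v' := by
  rcases append_eq_append_iff.mp h with ⟨s, rfl, hs⟩ | ⟨s, rfl, hs⟩
  · cases s with
    | nil => simpa using hs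
    | cons b s =>
      simp only [cons_append, cons.injEq] at hs
      exact absurd (hs.2 ▸ mem_append_right s mem_cons_self) hv
  · cases s with
    | nil => simpa using hs.symm
    | cons b s =>
      simp only [cons_append, cons.injEq] at hs
      exact absurd (hs.2 ▸ mem_append_right s mem_cons_self) hv'

section AscList

@[simp] lemma ascList_nil : ascList [] = 0 := rfl

@[simp] lemma ascList_singleton (a : ℕ) : ascList [a] = 0 := rfl

lemma ascList_cons_cons (a b : ℕ) (l : List ℕ) :
    ascList (a :: b :: l) = (if a < b then 1 else 0) + ascList (b :: l) := by
  simp only [ascList, tail_cons, zip_cons_cons, countP_cons, decide_eq_true_eq]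
  omega

lemma ascList_append_cons (u : List ℕ) (z : ℕ) (v : List ℕ) :
    ascList (u ++ z :: v) = ascList (u ++ [z]) + ascList (z :: v) := by
  induction u with
  | nil => simp
  | cons a u ih =>
    cases u with
    | nil => simp [ascList_cons_cons]
    | cons b t => simp only [cons_append, ascList_cons_cons] at *; omega

lemma ascList_concat {u : List ℕ} (hu : u ≠ []) (z : ℕ) :
    ascList (u ++ [z]) = ascList u + if u.getLast hu < z then 1 else 0 := by
  induction u with
  | nil => contradiction
  | cons a u ih =>
    cases u with
    | nil =>
      simp only [nil_append, cons_append, ascList_cons_cons, ascList_singleton,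
        getLast_singleton, add_zero, zero_add]
      congr
    | cons b t =>
      simp only [cons_append, ascList_cons_cons, getLast_cons_cons] at ih ⊢
      rw [ih (cons_ne_nil _ _), add_assoc]
      congr

lemma ascList_concat_of_forall_le {u : List ℕ} {z : ℕ} (h : ∀ x ∈ u, z ≤ x) :
    ascList (u ++ [z]) = ascList u := by
  rcases eq_or_ne u [] with rfl | hu
  · rfl
  · rw [ascList_concat hu, if_neg (not_lt.mpr (h _ (getLast_mem hu))), add_zero]

@[simp] lemma ascList_map_add (c : ℕ) (l : List ℕ) : ascList (l.map (· + c)) = ascList l := by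
  induction l with
  | nil => rfl
  | cons a l ih =>
    cases l with
    | nil => rfl
    | cons b t =>
      simp only [map_cons] at ih ⊢
      rw [ascList_cons_cons, ih, ascList_cons_cons a b t]
      simp

lemma ascList_append_cons_map_add {u v : List ℕ} {p c : ℕ} (hu : ∀ x ∈ u, p ≤ x)
    (hv : ∀ y ∈ v, p < y + c) :
    ascList (u ++ p :: v.map (· + c)) = ascList u + ascList v + if v = [] then 0 else 1 := by
  rw [ascList_append_cons, ascList_concat_of_forall_le hu]
  cases v with
  | nil => simp
  | cons y v =>
    rw [← ascList_map_add c (y :: v), map_cons, ascList_cons_cons, if_pos (hv y mem_cons_self),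
      if_neg (cons_ne_nil y v)]
    omega

end AscList

section Patterns

lemma triple_sublist_iff {l : List ℕ} {a b c : ℕ} :
    [a, b, c] <+ l ↔ ∃ i j k, i < j ∧ j < k ∧ k < l.length ∧
      l.getD i 0 = a ∧ l.getD j 0 = b ∧ l.getD k 0 = c := by
  constructor
  · intro h
    obtain ⟨is, heq, hsorted⟩ := sublist_eq_map_getElem h
    rcases is with _ | ⟨i, _ | ⟨j, _ | ⟨k, _ | ⟨_, _⟩⟩⟩⟩ <;> simp at heq
    obtain ⟨rfl, rfl, rfl⟩ := heq
    simp only [pairwise_cons, mem_cons, forall_eq_or_imp, Fin.lt_def] at hsorted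
    exact ⟨i, j, k, by omega, by omega, k.isLt, by simp, by simp, by simp⟩
  · rintro ⟨i, j, k, hij, hjk, hk, rfl, rfl, rfl⟩
    have hsorted : [(⟨i, by omega⟩ : Fin l.length), ⟨j, by omega⟩, ⟨k, hk⟩].Pairwise (· < ·) := by
      simp [Fin.mk_lt_mk]
      omega
    simpa [getD_eq_getElem, show i < l.length by omega, show j < l.length by omega, hk]
      using map_getElem_sublist hsorted

lemma triple_sublist_append_cases {x y z : ℕ} {u v : List ℕ} (h : [x, y, z] <+ u ++ v) :
    [x, y, z] <+ u ∨ ([x, y] <+ u ∧ [z] <+ v) ∨ ([x] <+ u ∧ [y, z] <+ v) ∨ [x, y, z] <+ v := by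
  obtain ⟨l₁, l₂, heq, h₁, h₂⟩ := sublist_append_iff.mp h
  rcases l₁ with _ | ⟨_, _ | ⟨_, _ | ⟨_, _ | ⟨_, _⟩⟩⟩⟩ <;> simp at heq
  all_goals grind

lemma contains101_iff_sublist {l : List ℕ} :
    Contains101 l ↔ ∃ a b, a < b ∧ [b, a, b] <+ l := by
  simp only [Contains101, triple_sublist_iff]
  constructor
  · rintro ⟨i, j, k, hij, hjk, hk, hlt, heq⟩
    exact ⟨_, _, hlt, i, j, k, hij, hjk, hk, rfl, rfl, heq.symm⟩
  · rintro ⟨_, _, hab, i, j, k, hij, hjk, hk, rfl, rfl, heq⟩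
    exact ⟨i, j, k, hij, hjk, hk, hab, heq.symm⟩

lemma contains312_iff_sublist {l : List ℕ} :
    Contains312 l ↔ ∃ a b c, a < b ∧ b < c ∧ [c, a, b] <+ l := by
  simp only [Contains312, triple_sublist_iff]
  constructor
  · rintro ⟨i, j, k, hij, hjk, hk, h₁, h₂⟩
    exact ⟨_, _, _, h₁, h₂, i, j, k, hij, hjk, hk, rfl, rfl, rfl⟩
  · rintro ⟨_, _, _, h₁, h₂, i, j, k, hij, hjk, hk, rfl, rfl, rfl⟩
    exact ⟨i, j, k, hij, hjk, hk, h₁, h₂⟩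

lemma Contains101.mono {l l' : List ℕ} (h : Contains101 l) (hl : l <+ l') : Contains101 l' := by
  obtain ⟨a, b, hab, hs⟩ := contains101_iff_sublist.mp h
  exact contains101_iff_sublist.mpr ⟨a, b, hab, hs.trans hl⟩

lemma Contains312.mono {l l' : List ℕ} (h : Contains312 l) (hl : l <+ l') : Contains312 l' := by
  obtain ⟨a, b, c, hab, hbc, hs⟩ := contains312_iff_sublist.mp h
  exact contains312_iff_sublist.mpr ⟨a, b, c, hab, hbc, hs.trans hl⟩

lemma contains101_map_iff {f : ℕ → ℕ} (hf : StrictMono f) {l : List ℕ} :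
    Contains101 (l.map f) ↔ Contains101 l := by
  simp only [contains101_iff_sublist]
  constructor
  · rintro ⟨a, b, hab, hs⟩
    obtain ⟨l', hl', heq⟩ := sublist_map_iff.mp hs
    rcases l' with _ | ⟨b₁, _ | ⟨a₁, _ | ⟨b₂, _ | ⟨_, _⟩⟩⟩⟩ <;> simp at heq
    obtain ⟨rfl, rfl, hb⟩ := heq
    obtain rfl := hf.injective hb
    exact ⟨a₁, b₁, hf.lt_iff_lt.mp hab, hl'⟩
  · rintro ⟨a, b, hab, hs⟩
    exact ⟨f a, f b, hf hab, hs.map f⟩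

lemma contains312_map_iff {f : ℕ → ℕ} (hf : StrictMono f) {l : List ℕ} :
    Contains312 (l.map f) ↔ Contains312 l := by
  simp only [contains312_iff_sublist]
  constructor
  · rintro ⟨a, b, c, hab, hbc, hs⟩
    obtain ⟨l', hl', heq⟩ := sublist_map_iff.mp hs
    rcases l' with _ | ⟨c₁, _ | ⟨a₁, _ | ⟨b₁, _ | ⟨_, _⟩⟩⟩⟩ <;> simp at heq
    obtain ⟨rfl, rfl, rfl⟩ := heq
    exact ⟨a₁, b₁, c₁, hf.lt_iff_lt.mp hab, hf.lt_iff_lt.mp hbc, hl'⟩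
  · rintro ⟨a, b, c, hab, hbc, hs⟩
    exact ⟨f a, f b, f c, hf hab, hf hbc, hs.map f⟩

lemma Contains101.of_append {u v : List ℕ} (h : Contains101 (u ++ v))
    (huv : ∀ x ∈ u, x ∉ v) : Contains101 u ∨ Contains101 v := by
  obtain ⟨a, b, hab, hs⟩ := contains101_iff_sublist.mp h
  rcases triple_sublist_append_cases hs with hs | ⟨hu, hv⟩ | ⟨hu, hv⟩ | hs
  · exact .inl (contains101_iff_sublist.mpr ⟨a, b, hab, hs⟩)
  · exact absurd (hv.subset (by simp)) (huv b (hu.subset (by simp)))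
  · exact absurd (hv.subset (by simp)) (huv b (hu.subset (by simp)))
  · exact .inr (contains101_iff_sublist.mpr ⟨a, b, hab, hs⟩)

lemma Contains312.of_append {u v : List ℕ} (h : Contains312 (u ++ v))
    (huv : ∀ x ∈ u, ∀ y ∈ v, x < y) : Contains312 u ∨ Contains312 v := by
  obtain ⟨a, b, c, hab, hbc, hs⟩ := contains312_iff_sublist.mp h
  rcases triple_sublist_append_cases hs with hs | ⟨hu, hv⟩ | ⟨hu, hv⟩ | hs
  · exact .inl (contains312_iff_sublist.mpr ⟨a, b, c, hab, hbc, hs⟩)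
  · exact absurd (huv c (hu.subset (by simp)) b (hv.subset (by simp))) (by omega)
  · exact absurd (huv c (hu.subset (by simp)) b (hv.subset (by simp))) (by omega)
  · exact .inr (contains312_iff_sublist.mpr ⟨a, b, c, hab, hbc, hs⟩)

/-- Only the last letter of the pattern could be the appended one, and it exceeds an earlier
letter of the pattern. -/
lemma Contains101.of_concat {l : List ℕ} {m : ℕ} (h : Contains101 (l ++ [m]))
    (hm : ∀ x ∈ l, m ≤ x) : Contains101 l := by
  obtain ⟨a, b, hab, hs⟩ := contains101_iff_sublist.mp h
  rcases triple_sublist_append_cases hs with hs | ⟨hu, hv⟩ | ⟨_, hv⟩ | hs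
  · exact contains101_iff_sublist.mpr ⟨a, b, hab, hs⟩
  · have := hm a (hu.subset (by simp))
    simp at hv
    omega
  · simpa using hv.length_le
  · simpa using hs.length_le

lemma Contains312.of_concat {l : List ℕ} {m : ℕ} (h : Contains312 (l ++ [m]))
    (hm : ∀ x ∈ l, m ≤ x) : Contains312 l := by
  obtain ⟨a, b, c, hab, hbc, hs⟩ := contains312_iff_sublist.mp h
  rcases triple_sublist_append_cases hs with hs | ⟨hu, hv⟩ | ⟨_, hv⟩ | hs
  · exact contains312_iff_sublist.mpr ⟨a, b, c, hab, hbc, hs⟩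
  · have := hm a (hu.subset (by simp))
    simp at hv
    omega
  · simpa using hv.length_le
  · simpa using hs.length_le

end Patterns

section AscentSequences

lemma isAscSeq_singleton_iff {z : ℕ} : IsAscSeq [z] ↔ z = 0 := by
  simp +contextual [IsAscSeq]

lemma isAscSeq_concat_iff {l : List ℕ} (hl : l ≠ []) {z : ℕ} :
    IsAscSeq (l ++ [z]) ↔ IsAscSeq l ∧ z ≤ ascList l + 1 := by
  have hpos : 0 < l.length := length_pos_iff.mpr hl
  have hget : ∀ i < l.length, (l ++ [z]).getD i 0 = l.getD i 0 :=
    fun i hi => getD_append _ _ _ _ hi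
  have hlast : (l ++ [z]).getD l.length 0 = z := by simp
  have htake : ∀ i ≤ l.length, (l ++ [z]).take i = l.take i :=
    fun i hi => take_append_of_le_length hi
  simp only [IsAscSeq, ne_eq, append_eq_nil_iff, cons_ne_nil, and_false, not_false_eq_true,
    true_and, length_append, length_singleton, hl, hget 0 hpos]
  constructor
  · rintro ⟨h0, h⟩
    refine ⟨⟨h0, fun i hi0 hi => ?_⟩, ?_⟩
    · simpa only [hget i hi, htake i hi.le] using h i hi0 (by omega)
    · simpa only [hlast, htake l.length le_rfl, take_length] using h l.length hpos (by omega)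
  · rintro ⟨⟨h0, h⟩, hz⟩
    refine ⟨h0, fun i hi0 hi => ?_⟩
    rcases Nat.lt_or_ge i l.length with hi | hi
    · rw [hget i hi, htake i hi.le]
      exact h i hi0 hi
    · obtain rfl : i = l.length := by omega
      rwa [hlast, htake l.length le_rfl, take_length]

@[elab_as_elim]
lemma IsAscSeq.induction {motive : List ℕ → Prop} (singleton : motive [0])
    (concat : ∀ l z, IsAscSeq l → z ≤ ascList l + 1 → motive l → motive (l ++ [z]))
    {l : List ℕ} (h : IsAscSeq l) : motive l := by
  induction l using reverseRecOn with
  | nil => exact absurd rfl h.1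
  | append_singleton l z ih =>
    rcases eq_or_ne l [] with rfl | hl
    · rwa [nil_append, isAscSeq_singleton_iff.mp h]
    · obtain ⟨hl', hz⟩ := (isAscSeq_concat_iff hl).mp h
      exact concat l z hl' hz (ih hl')

lemma IsAscSeq.le_ascList {l : List ℕ} (h : IsAscSeq l) : ∀ x ∈ l, x ≤ ascList l := by
  refine h.induction (by simp) fun l z hl hz ih x hx => ?_
  have hlast := ih _ (getLast_mem hl.1)
  rw [ascList_concat hl.1]
  rcases mem_append.mp hx with hx | hx
  · have := ih x hx
    split_ifs <;> omega
  · rw [mem_singleton.mp hx]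
    split_ifs <;> omega

lemma contains101_concat_of_mem {l : List ℕ} (hl : l ≠ []) {z : ℕ} (hz : z ∈ l)
    (hlast : l.getLast hl < z) : Contains101 (l ++ [z]) := by
  have hz' : z ∈ l.dropLast := by
    rw [← dropLast_append_getLast hl, mem_append, mem_singleton] at hz
    exact hz.resolve_right hlast.ne'
  refine contains101_iff_sublist.mpr ⟨_, _, hlast, ?_⟩
  have hs := ((singleton_sublist.mpr hz').append (Sublist.refl [l.getLast hl])).append
    (Sublist.refl [z])
  rwa [dropLast_append_getLast hl] at hs

/-- A letter `z` that creates a new ascent is a new maximum: an earlier occurrence of `z`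
would give the `101` pattern `z, last, z`. -/
lemma IsAscSeq.mem_of_le_ascList {l : List ℕ} (h : IsAscSeq l) (h101 : ¬ Contains101 l) :
    ∀ m ≤ ascList l, m ∈ l := by
  refine h.induction (motive := fun l => ¬ Contains101 l → ∀ m ≤ ascList l, m ∈ l)
    (by simp) (fun l z hl hz ih h101 m hm => ?_) h101
  have ih' := ih fun h => h101 (h.mono (sublist_append_left _ _))
  rcases le_or_gt m (ascList l) with hm' | hm'
  · exact mem_append_left _ (ih' m hm')
  rw [ascList_concat hl.1] at hm
  split_ifs at hm with hlast
  · obtain rfl : m = z := by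
      by_contra hne
      exact h101 (contains101_concat_of_mem hl.1 (ih' z (by omega)) hlast)
    simp
  · omega

end AscentSequences

section JoinAsc

/-- Every `101`-avoiding ascent sequence splits at its last `0` as `joinAsc u w`. -/
def joinAsc (u w : List ℕ) : List ℕ := u ++ 0 :: w.map (· + (ascList u + 1))

def IsAscSeqAvoiding101 (l : List ℕ) : Prop := (l = [] ∨ IsAscSeq l) ∧ ¬ Contains101 l

lemma ascList_joinAsc (u w : List ℕ) :
    ascList (joinAsc u w) = ascList u + ascList w + if w = [] then 0 else 1 :=
  ascList_append_cons_map_add (fun _ _ => Nat.zero_le _) fun _ _ => by omega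

lemma joinAsc_concat (u w : List ℕ) (y : ℕ) :
    joinAsc u (w ++ [y]) = joinAsc u w ++ [y + (ascList u + 1)] := by
  simp [joinAsc]

lemma isAscSeq_joinAsc {u w : List ℕ} (hu : u = [] ∨ IsAscSeq u) (hw : w = [] ∨ IsAscSeq w) :
    IsAscSeq (joinAsc u w) := by
  have hu0 : IsAscSeq (u ++ [0]) := by
    rcases hu with rfl | hu
    · exact isAscSeq_singleton_iff.mpr rfl
    · exact (isAscSeq_concat_iff hu.1).mpr ⟨hu, Nat.zero_le _⟩
  rcases hw with rfl | hw
  · exact hu0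
  refine hw.induction ?_ fun w y hw hy ih => ?_
  · rw [← nil_append [0], joinAsc_concat]
    refine (isAscSeq_concat_iff (by simp [joinAsc])).mpr ⟨hu0, ?_⟩
    rw [ascList_joinAsc]
    simp
  · rw [joinAsc_concat]
    refine (isAscSeq_concat_iff (by simp [joinAsc])).mpr ⟨ih, ?_⟩
    rw [ascList_joinAsc, if_neg hw.1]
    omega

lemma not_contains101_joinAsc {u w : List ℕ} (hu : IsAscSeqAvoiding101 u)
    (hw : ¬ Contains101 w) : ¬ Contains101 (joinAsc u w) := by
  have hle : ∀ x ∈ u, x ≤ ascList u := hu.1.elim (fun h => by simp [h]) IsAscSeq.le_ascList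
  have hdisj : ∀ x ∈ u ++ [0], x ∉ w.map (· + (ascList u + 1)) := by
    intro x hx hx'
    obtain ⟨y, -, rfl⟩ := mem_map.mp hx'
    rcases mem_append.mp hx with hx | hx
    · have := hle _ hx
      omega
    · simp at hx
  intro h
  rw [joinAsc, ← singleton_append, ← append_assoc] at h
  rcases h.of_append hdisj with h | h
  · exact hu.2 (h.of_concat fun _ _ => Nat.zero_le _)
  · exact hw ((contains101_map_iff add_left_strictMono).mp h)

lemma isAscSeqAvoiding101_joinAsc {u w : List ℕ} (hu : IsAscSeqAvoiding101 u)
    (hw : IsAscSeqAvoiding101 w) : IsAscSeqAvoiding101 (joinAsc u w) :=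
  ⟨.inr (isAscSeq_joinAsc hu.1 hw.1), not_contains101_joinAsc hu hw.2⟩

lemma not_contains101_of_length_lt_three {l : List ℕ} (hl : l.length < 3) : ¬ Contains101 l := by
  rintro ⟨i, j, k, hij, hjk, hk, -⟩
  omega

/-- Appending a letter `z` to `joinAsc u w` either starts a new last `0` (`z = 0`) or appends
`z - (asc u + 1)` to `w`: a positive `z ≤ asc u` already occurs in `u` and would close a `101`
around the pivot `0`. -/
lemma IsAscSeq.exists_eq_joinAsc {l : List ℕ} (hl : IsAscSeq l) (h101 : ¬ Contains101 l) :
    ∃ u w, IsAscSeqAvoiding101 u ∧ IsAscSeqAvoiding101 w ∧ l = joinAsc u w := by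
  refine hl.induction (motive := fun l => ¬ Contains101 l →
      ∃ u w, IsAscSeqAvoiding101 u ∧ IsAscSeqAvoiding101 w ∧ l = joinAsc u w)
    (fun _ => ⟨[], [], ⟨.inl rfl, by simp [Contains101]⟩, ⟨.inl rfl, by simp [Contains101]⟩, rfl⟩)
    (fun l z hl hz ih h101 => ?_) h101
  obtain ⟨u, w, hu, hw, rfl⟩ := ih fun h => h101 (h.mono (sublist_append_left _ _))
  rcases z.eq_zero_or_pos with rfl | hz0
  · refine ⟨joinAsc u w, [], ⟨.inr hl, fun h => h101 (h.mono (sublist_append_left _ _))⟩,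
      ⟨.inl rfl, by simp [Contains101]⟩, by simp [joinAsc]⟩
  have hcz : ascList u + 1 ≤ z := by
    by_contra! hzu
    have hune : u ≠ [] := by
      rintro rfl
      simp at hzu
      omega
    have hmem := (hu.1.resolve_left hune).mem_of_le_ascList hu.2 z (by omega)
    refine h101 (contains101_iff_sublist.mpr ⟨0, z, hz0, ?_⟩)
    exact ((singleton_sublist.mpr hmem).append (singleton_sublist.mpr mem_cons_self)).append
      (Sublist.refl [z])
  rcases hw with ⟨rfl | hw, hw101⟩
  · obtain rfl : z = ascList u + 1 := by
      rw [ascList_joinAsc] at hz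
      simp at hz
      omega
    refine ⟨u, [0], hu, ⟨.inr (isAscSeq_singleton_iff.mpr rfl),
      not_contains101_of_length_lt_three (by simp)⟩, by simp [joinAsc]⟩
  refine ⟨u, w ++ [z - (ascList u + 1)], hu,
    ⟨.inr ((isAscSeq_concat_iff hw.1).mpr ⟨hw, ?_⟩), fun h => h101 ?_⟩, ?_⟩
  · rw [ascList_joinAsc, if_neg hw.1] at hz
    omega
  · rw [← contains101_map_iff (add_left_strictMono (a := ascList u + 1)), map_append, map_singleton,
      Nat.sub_add_cancel hcz] at h
    exact h.mono (((sublist_cons_self _ _).trans (sublist_append_right _ _)).append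
      (Sublist.refl _))
  · rw [joinAsc_concat, Nat.sub_add_cancel hcz]

lemma joinAsc_inj {u w u' w' : List ℕ} (h : joinAsc u w = joinAsc u' w') : u = u' ∧ w = w' := by
  have hpos : ∀ c (l : List ℕ), 0 ∉ l.map (· + (c + 1)) := by simp
  obtain ⟨rfl, h⟩ := eq_and_eq_of_append_cons_eq (hpos _ _) (hpos _ _) h
  exact ⟨rfl, map_injective_iff.mpr (add_left_injective _) h⟩

end JoinAsc

section JoinPerm

/-- Every nonempty `312`-avoiding permutation splits at the letter `1` as `joinPerm α β`. -/
def joinPerm (α β : List ℕ) : List ℕ := α.map (· + 1) ++ 1 :: β.map (· + (α.length + 1))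

def IsPermAvoiding312 (w : List ℕ) : Prop := w ~ range' 1 w.length ∧ ¬ Contains312 w

lemma map_add_const_range' (c s n : ℕ) : (range' s n).map (· + c) = range' (s + c) n := by
  apply ext_getElem <;> simp [Nat.add_right_comm]

@[simp] lemma length_joinPerm (α β : List ℕ) :
    (joinPerm α β).length = α.length + β.length + 1 := by
  simp [joinPerm]
  omega

lemma ascList_joinPerm (α : List ℕ) {β : List ℕ} (hβ : ∀ y ∈ β, 0 < y) :
    ascList (joinPerm α β) = ascList α + ascList β + if β = [] then 0 else 1 := by
  rw [joinPerm, ascList_append_cons_map_add (by simp) fun y hy => by have := hβ y hy; omega,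
    ascList_map_add]

lemma perm_joinPerm {α β : List ℕ} (hα : α ~ range' 1 α.length) (hβ : β ~ range' 1 β.length) :
    joinPerm α β ~ range' 1 (joinPerm α β).length := by
  have hα' : α.map (· + 1) ~ range' 2 α.length := by
    have := hα.map (· + 1)
    rwa [map_add_const_range'] at this
  have hβ' : β.map (· + (α.length + 1)) ~ range' (α.length + 2) β.length := by
    simpa only [map_add_const_range', Nat.add_comm 1, Nat.add_assoc]
      using hβ.map (· + (α.length + 1))
  calc joinPerm α β ~ 1 :: (range' 2 α.length ++ range' (α.length + 2) β.length) :=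
        (hα'.append (hβ'.cons 1)).trans perm_middle
    _ = range' 1 (joinPerm α β).length := by
        rw [show α.length + 2 = 2 + α.length by omega, range'_append_1, length_joinPerm,
          show α.length + β.length + 1 = (α.length + β.length) + 1 by omega, range'_succ]

lemma IsPermAvoiding312.pos {w : List ℕ} (hw : IsPermAvoiding312 w) : ∀ x ∈ w, 0 < x :=
  fun x hx => by have := mem_range'_1.mp (hw.1.subset hx); omega

lemma IsPermAvoiding312.le_length {w : List ℕ} (hw : IsPermAvoiding312 w) :
    ∀ x ∈ w, x ≤ w.length :=
  fun x hx => by have := mem_range'_1.mp (hw.1.subset hx); omega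

lemma not_contains312_joinPerm {α β : List ℕ} (hα : IsPermAvoiding312 α)
    (hβ : IsPermAvoiding312 β) : ¬ Contains312 (joinPerm α β) := by
  have hlt : ∀ x ∈ α.map (· + 1) ++ [1], ∀ y ∈ β.map (· + (α.length + 1)), x < y := by
    intro x hx y hy
    obtain ⟨b, hb, rfl⟩ := mem_map.mp hy
    have := hβ.pos b hb
    rcases mem_append.mp hx with hx | hx
    · obtain ⟨a, ha, rfl⟩ := mem_map.mp hx
      have := hα.le_length a ha
      omega
    · simp at hx
      omega
  intro h
  rw [joinPerm, ← singleton_append, ← append_assoc] at h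
  rcases h.of_append hlt with h | h
  · exact hα.2 ((contains312_map_iff add_left_strictMono).mp (h.of_concat (by simp)))
  · exact hβ.2 ((contains312_map_iff add_left_strictMono).mp h)

lemma isPermAvoiding312_joinPerm {α β : List ℕ} (hα : IsPermAvoiding312 α)
    (hβ : IsPermAvoiding312 β) : IsPermAvoiding312 (joinPerm α β) :=
  ⟨perm_joinPerm hα.1 hβ.1, not_contains312_joinPerm hα hβ⟩

lemma perm_range'_of_append_of_lt {A B : List ℕ} {s : ℕ}
    (h : A ++ B ~ range' s (A.length + B.length)) (hlt : ∀ x ∈ A, ∀ y ∈ B, x < y) :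
    A ~ range' s A.length ∧ B ~ range' (s + A.length) B.length := by
  have hbound : ∀ x ∈ A ++ B, s ≤ x ∧ x < s + (A.length + B.length) :=
    fun x hx => mem_range'_1.mp (h.subset hx)
  have hnodup := h.nodup_iff.mpr nodup_range'
  rw [nodup_append] at hnodup
  -- `B` fits strictly above any `x ∈ A`, which leaves no room unless `x < s + |A|`
  have hA : A ⊆ range' s A.length := by
    intro x hx
    have hxb := hbound x (mem_append_left _ hx)
    refine mem_range'_1.mpr ⟨hxb.1, ?_⟩
    by_contra! hx'
    have hB : B ⊆ range' (x + 1) (s + (A.length + B.length) - (x + 1)) := fun y hy => by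
      have := hbound y (mem_append_right _ hy)
      have := hlt x hx y hy
      exact mem_range'_1.mpr (by omega)
    have := (hnodup.2.1.subperm hB).length_le
    rw [length_range'] at this
    omega
  have hA' : A ~ range' s A.length :=
    (hnodup.1.subperm hA).perm_of_length_le (by rw [length_range'])
  refine ⟨hA', (perm_append_left_iff (range' s A.length)).mp ?_⟩
  rw [range'_append_1]
  exact (hA'.symm.append_right B).trans h

lemma exists_eq_map_add_of_forall_le {l : List ℕ} {c : ℕ} (h : ∀ x ∈ l, c ≤ x) :
    ∃ l' : List ℕ, l = l'.map (· + c) := by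
  induction l with
  | nil => exact ⟨[], rfl⟩
  | cons a l ih =>
    obtain ⟨l', rfl⟩ := ih fun x hx => h x (mem_cons_of_mem a hx)
    exact ⟨(a - c) :: l', by simp [Nat.sub_add_cancel (h a mem_cons_self)]⟩

/-- In a `312`-avoiding permutation everything left of `1` is below everything right of it:
a larger letter on the left would play the `3` of `x 1 y`. -/
lemma IsPermAvoiding312.exists_eq_joinPerm {w : List ℕ} (hw : IsPermAvoiding312 w)
    (hne : w ≠ []) : ∃ α β, IsPermAvoiding312 α ∧ IsPermAvoiding312 β ∧ w = joinPerm α β := by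
  have h1 : 1 ∈ w := hw.1.mem_iff.mpr (mem_range'_1.mpr ⟨le_rfl, by
    have := length_pos_iff.mpr hne
    omega⟩)
  obtain ⟨A, B, rfl⟩ := append_of_mem h1
  have hperm : A ++ B ~ range' 2 (A.length + B.length) := by
    have := perm_middle.symm.trans hw.1
    rwa [length_append, length_cons, ← Nat.add_assoc, range'_succ, perm_cons] at this
  have hlt : ∀ x ∈ A, ∀ y ∈ B, x < y := by
    intro x hx y hy
    have hy2 := (mem_range'_1.mp (hperm.subset (mem_append_right A hy))).1
    have hxy : x ≠ y := (nodup_append.mp (hperm.nodup_iff.mpr nodup_range')).2.2 x hx y hy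
    by_contra! hyx
    refine hw.2 (contains312_iff_sublist.mpr ⟨1, y, x, by omega, by omega, ?_⟩)
    exact (singleton_sublist.mpr hx).append ((singleton_sublist.mpr hy).cons_cons 1)
  obtain ⟨hA, hB⟩ := perm_range'_of_append_of_lt hperm hlt
  obtain ⟨α, rfl⟩ := exists_eq_map_add_of_forall_le (c := 1) fun x hx => by
    have := mem_range'_1.mp (hA.subset hx)
    omega
  obtain ⟨β, rfl⟩ := exists_eq_map_add_of_forall_le (c := α.length + 1) fun y hy => by
    have := mem_range'_1.mp (hB.subset hy)
    simp only [length_map] at this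
    omega
  have hα : α ~ range' 1 α.length := by
    rw [← map_perm_map_iff (add_left_injective 1), map_add_const_range']
    simpa using hA
  have hβ : β ~ range' 1 β.length := by
    rw [← map_perm_map_iff (add_left_injective (α.length + 1)), map_add_const_range']
    simpa [Nat.add_comm 2, Nat.add_comm 1] using hB
  refine ⟨α, β, ⟨hα, fun h => hw.2 ?_⟩, ⟨hβ, fun h => hw.2 ?_⟩, rfl⟩
  · exact ((contains312_map_iff add_left_strictMono).mpr h).mono (sublist_append_left _ _)
  · exact ((contains312_map_iff add_left_strictMono).mpr h).mono
      ((sublist_cons_self _ _).trans (sublist_append_right _ _))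

lemma joinPerm_inj {α β α' β' : List ℕ} (hβ : ∀ y ∈ β, 0 < y) (hβ' : ∀ y ∈ β', 0 < y)
    (h : joinPerm α β = joinPerm α' β') : α = α' ∧ β = β' := by
  have hne : ∀ (c : ℕ) (l : List ℕ), (∀ y ∈ l, 0 < y) → 1 ∉ l.map (· + (c + 1)) := by
    intro c l hl hmem
    obtain ⟨y, hy, hy1⟩ := mem_map.mp hmem
    have := hl y hy
    omega
  obtain ⟨hα, h⟩ := eq_and_eq_of_append_cons_eq (hne _ _ hβ) (hne _ _ hβ') h
  obtain rfl := map_injective_iff.mpr (add_left_injective 1) hα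
  exact ⟨rfl, map_injective_iff.mpr (add_left_injective _) h⟩

end JoinPerm

section Trees

def ascSeqOfTree : BinaryTree Unit → List ℕ
  | .nil => []
  | .node _ u w => joinAsc (ascSeqOfTree u) (ascSeqOfTree w)

def permOfTree : BinaryTree Unit → List ℕ
  | .nil => []
  | .node _ u w => joinPerm (permOfTree u) (permOfTree w)

lemma length_ascSeqOfTree (t : BinaryTree Unit) : (ascSeqOfTree t).length = t.numNodes := by
  induction t with
  | nil => rfl
  | node _ u w hu hw =>
    simp [ascSeqOfTree, joinAsc, hu, hw]
    omega

lemma length_permOfTree (t : BinaryTree Unit) : (permOfTree t).length = t.numNodes := by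
  induction t with
  | nil => rfl
  | node _ u w hu hw => simp [permOfTree, hu, hw]

lemma isAscSeqAvoiding101_ascSeqOfTree (t : BinaryTree Unit) :
    IsAscSeqAvoiding101 (ascSeqOfTree t) := by
  induction t with
  | nil => exact ⟨.inl rfl, not_contains101_of_length_lt_three (by simp [ascSeqOfTree])⟩
  | node _ u w hu hw => exact isAscSeqAvoiding101_joinAsc hu hw

lemma isPermAvoiding312_permOfTree (t : BinaryTree Unit) : IsPermAvoiding312 (permOfTree t) := by
  induction t with
  | nil => exact ⟨by simp [permOfTree], by simp [Contains312, permOfTree]⟩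
  | node _ u w hu hw => exact isPermAvoiding312_joinPerm hu hw

lemma ascList_permOfTree (t : BinaryTree Unit) :
    ascList (permOfTree t) = ascList (ascSeqOfTree t) := by
  induction t with
  | nil => rfl
  | node _ u w hu hw =>
    have hnil : permOfTree w = [] ↔ ascSeqOfTree w = [] := by
      rw [← length_eq_zero_iff, ← length_eq_zero_iff, length_permOfTree, length_ascSeqOfTree]
    rw [permOfTree, ascSeqOfTree, ascList_joinPerm _ (isPermAvoiding312_permOfTree w).pos,
      ascList_joinAsc, hu, hw, if_congr hnil rfl rfl]

lemma ascSeqOfTree_injective : Function.Injective ascSeqOfTree := by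
  intro t t' h
  induction t generalizing t' with
  | nil => cases t' <;> simp_all [ascSeqOfTree, joinAsc]
  | node _ u w hu hw =>
    cases t' with
    | nil => simp [ascSeqOfTree, joinAsc] at h
    | node _ u' w' =>
      obtain ⟨hu', hw'⟩ := joinAsc_inj h
      rw [hu hu', hw hw']

lemma permOfTree_injective : Function.Injective permOfTree := by
  intro t t' h
  induction t generalizing t' with
  | nil => cases t' <;> simp_all [permOfTree, joinPerm]
  | node _ u w hu hw =>
    cases t' with
    | nil => simp [permOfTree, joinPerm] at h
    | node _ u' w' =>
      obtain ⟨hu', hw'⟩ := joinPerm_inj (isPermAvoiding312_permOfTree w).pos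
        (isPermAvoiding312_permOfTree w').pos h
      rw [hu hu', hw hw']

lemma exists_ascSeqOfTree_eq {l : List ℕ} (hl : IsAscSeqAvoiding101 l) :
    ∃ t, ascSeqOfTree t = l := by
  rcases hl with ⟨rfl | hl, h101⟩
  · exact ⟨.nil, rfl⟩
  obtain ⟨u, w, hu, hw, rfl⟩ := hl.exists_eq_joinAsc h101
  obtain ⟨tu, rfl⟩ := exists_ascSeqOfTree_eq hu
  obtain ⟨tw, rfl⟩ := exists_ascSeqOfTree_eq hw
  exact ⟨.node () tu tw, rfl⟩
termination_by l.length
decreasing_by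
  all_goals (subst_vars; simp only [joinAsc, length_append, length_cons, length_map]; omega)

lemma exists_permOfTree_eq {w : List ℕ} (hw : IsPermAvoiding312 w) :
    ∃ t, permOfTree t = w := by
  rcases eq_or_ne w [] with rfl | hne
  · exact ⟨.nil, rfl⟩
  obtain ⟨α, β, hα, hβ, rfl⟩ := hw.exists_eq_joinPerm hne
  obtain ⟨tα, rfl⟩ := exists_permOfTree_eq hα
  obtain ⟨tβ, rfl⟩ := exists_permOfTree_eq hβ
  exact ⟨.node () tα tβ, rfl⟩
termination_by w.length
decreasing_by all_goals (subst_vars; simp only [length_joinPerm]; omega)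

lemma bijOn_numNodes {f : BinaryTree Unit → List ℕ} (hf : Function.Injective f)
    (hlen : ∀ t, (f t).length = t.numNodes) {P : List ℕ → Prop} (hP : ∀ t, P (f t))
    (hsurj : ∀ l, P l → ∃ t, f t = l) (n : ℕ) :
    Set.BijOn f {t | t.numNodes = n} {l | l.length = n ∧ P l} := by
  refine ⟨fun t ht => ⟨(hlen t).trans ht, hP t⟩, hf.injOn, fun l ⟨hn, hl⟩ => ?_⟩
  obtain ⟨t, rfl⟩ := hsurj l hl
  exact ⟨t, (hlen t).symm.trans hn, rfl⟩

lemma bijOn_ascSeqOfTree {n : ℕ} (hn : 1 ≤ n) :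
    Set.BijOn ascSeqOfTree {t | t.numNodes = n}
      {l | l.length = n ∧ IsAscSeq l ∧ ¬ Contains101 l} := by
  convert bijOn_numNodes ascSeqOfTree_injective length_ascSeqOfTree
    isAscSeqAvoiding101_ascSeqOfTree (fun _ => exists_ascSeqOfTree_eq) n using 1
  ext l
  simp only [Set.mem_ofPred_eq, IsAscSeqAvoiding101, and_congr_right_iff]
  rintro rfl
  simp [← length_eq_zero_iff]
  omega

lemma bijOn_permOfTree (n : ℕ) :
    Set.BijOn permOfTree {t | t.numNodes = n} {w | w ~ range' 1 n ∧ ¬ Contains312 w} := by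
  convert bijOn_numNodes permOfTree_injective length_permOfTree
    isPermAvoiding312_permOfTree (fun _ => exists_permOfTree_eq) n using 1
  ext w
  simp only [Set.mem_ofPred_eq, IsPermAvoiding312]
  constructor
  · rintro ⟨hw, h312⟩
    have hlen : w.length = n := by simpa using hw.length_eq
    exact ⟨hlen, hlen ▸ hw, h312⟩
  · rintro ⟨rfl, hw, h312⟩
    exact ⟨hw, h312⟩

end Trees

/-- There is an ascent-preserving bijection between 101-avoiding ascent sequences of
length `n` and 312-avoiding permutations of `{1,…,n}` (written as words). -/
theorem stmt13 (n : ℕ) (hn : 1 ≤ n) :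
    ∃ f : {l : List ℕ // l.length = n ∧ IsAscSeq l ∧ ¬ Contains101 l} ≃
          {w : List ℕ // w.Perm (List.range' 1 n) ∧ ¬ Contains312 w},
      ∀ x, ascList ((f x) : List ℕ) = ascList (x : List ℕ) := by
  let eA := (bijOn_ascSeqOfTree hn).equiv
  refine ⟨eA.symm.trans (bijOn_permOfTree n).equiv, fun x => ?_⟩
  obtain ⟨t, rfl⟩ := eA.surjective x
  simpa [eA, Set.BijOn.equiv] using ascList_permOfTree t
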